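/- arXiv:2506.21878 — 2 statements merged into one kernel-verified Lean document; each statement's English description precedes it below -/
import Mathlib

section
/- Let 0 ≤ s < η < e ≤ T be integers and let p(s+1),…,p(e) be a sequence in a real inner product space with p(t) = P₁ for s < t ≤ η and p(t) = P₂ for η < t ≤ e, and set κ = ‖P₂ − P₁‖. Then the CUSUM statistic satisfies ‖p̃^{s,e}(t)‖² = ((t − s)/((e − s)(e − t)))·(e − η)²·κ² for all s < t ≤ η, and ‖p̃^{s,e}(t)‖² = ((e − t)/((e − s)(t − s)))·(η − s)²·κ² for all η < t < e. -/
open scoped BigOperators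

/-- CUSUM weights `ω_{s,e}^t(u)`. -/
noncomputable def cusumW (s e t u : ℕ) : ℝ :=
  if u ≤ t then Real.sqrt (((e : ℝ) - t) / (((e : ℝ) - s) * ((t : ℝ) - s)))
  else - Real.sqrt (((t : ℝ) - s) / (((e : ℝ) - s) * ((e : ℝ) - t)))

/-- CUSUM statistic `B̃^{s,e}(t)` of a sequence in a real vector space. -/
noncomputable def cusum {V : Type*} [AddCommGroup V] [Module ℝ V]
    (B : ℕ → V) (s e t : ℕ) : V :=
  ∑ u ∈ Finset.Ioc s e, cusumW s e t u • B u

/-!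
The CUSUM weights on `(s, e]` sum to zero, so subtracting a constant from the sequence does not
change the statistic. Subtracting `P₁` (when `t ≤ η`) or `P₂` (when `η < t`) leaves a sequence
supported on a block where the weight is constant, and the statistic becomes a single multiple
of `P₂ - P₁`.
-/

open Finset

theorem sub_mul_sqrt_eq_sub_mul_sqrt {s t e : ℝ} (hst : s < t) (hte : t < e) :
    (t - s) * √((e - t) / ((e - s) * (t - s))) = (e - t) * √((t - s) / ((e - s) * (e - t))) := by
  have hts : 0 < t - s := sub_pos.2 hst
  have het : 0 < e - t := sub_pos.2 hte
  have hes : 0 < e - s := by linarith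
  refine (sq_eq_sq₀ (by positivity) (by positivity)).1 ?_
  rw [mul_pow, mul_pow, Real.sq_sqrt (by positivity), Real.sq_sqrt (by positivity)]
  field_simp

theorem cusumW_of_le {s e t u : ℕ} (h : u ≤ t) :
    cusumW s e t u = √(((e : ℝ) - t) / (((e : ℝ) - s) * ((t : ℝ) - s))) :=
  if_pos h

theorem cusumW_of_lt {s e t u : ℕ} (h : t < u) :
    cusumW s e t u = -√(((t : ℝ) - s) / (((e : ℝ) - s) * ((e : ℝ) - t))) :=
  if_neg h.not_ge

theorem sum_cusumW_eq_zero {s e t : ℕ} (hst : s < t) (hte : t < e) :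
    ∑ u ∈ Ioc s e, cusumW s e t u = 0 := by
  rw [← sum_Ioc_consecutive _ hst.le hte.le,
    sum_congr rfl fun u hu => cusumW_of_le (mem_Ioc.1 hu).2,
    sum_congr rfl fun u hu => cusumW_of_lt (mem_Ioc.1 hu).1,
    sum_const, sum_const, Nat.card_Ioc, Nat.card_Ioc, nsmul_eq_mul, nsmul_eq_mul,
    Nat.cast_sub hst.le, Nat.cast_sub hte.le,
    sub_mul_sqrt_eq_sub_mul_sqrt (Nat.cast_lt.2 hst) (Nat.cast_lt.2 hte)]
  ring

section

variable {V : Type*} [AddCommGroup V] [Module ℝ V]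

theorem cusum_sub_const {s e t : ℕ} (hst : s < t) (hte : t < e) (B : ℕ → V) (c : V) :
    cusum (fun u => B u - c) s e t = cusum B s e t := by
  simp only [cusum, smul_sub, sum_sub_distrib, ← sum_smul, sum_cusumW_eq_zero hst hte, zero_smul,
    sub_zero]

theorem cusum_eq_smul_of_eqOn_Ioc {B : ℕ → V} {s e t a b : ℕ} {v : V} {w : ℝ}
    (hsa : s ≤ a) (hab : a ≤ b) (hbe : b ≤ e)
    (hB_in : ∀ u ∈ Ioc a b, B u = v) (hB_out : ∀ u ∈ Ioc s e, u ∉ Ioc a b → B u = 0)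
    (hw : ∀ u ∈ Ioc a b, cusumW s e t u = w) :
    cusum B s e t = (((b : ℝ) - a) * w) • v := by
  rw [cusum, ← sum_subset (Ioc_subset_Ioc hsa hbe) fun u hu hu' => by rw [hB_out u hu hu',
      smul_zero],
    sum_congr rfl fun u hu => by rw [hw u hu, hB_in u hu], sum_const, Nat.card_Ioc,
    ← Nat.cast_smul_eq_nsmul ℝ, Nat.cast_sub hab, smul_smul]

end

theorem norm_smul_sq {E : Type*} [SeminormedAddCommGroup E] [NormedSpace ℝ E] (c : ℝ) (v : E) :
    ‖c • v‖ ^ 2 = c ^ 2 * ‖v‖ ^ 2 := by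
  rw [norm_smul, Real.norm_eq_abs, mul_pow, sq_abs]

theorem cusum_norm_single_change_point_general
    {E : Type*} [NormedAddCommGroup E] [InnerProductSpace ℝ E]
    (s η e : ℕ) (hsη : s < η) (hηe : η < e)
    (p : ℕ → E) (P₁ P₂ : E)
    (h1 : ∀ t, s < t → t ≤ η → p t = P₁)
    (h2 : ∀ t, η < t → t ≤ e → p t = P₂)
    (κ : ℝ) (hκ : κ = ‖P₂ - P₁‖) :
    (∀ t, s < t → t ≤ η →
      ‖cusum p s e t‖ ^ 2 =
        ((t : ℝ) - s) / (((e : ℝ) - s) * ((e : ℝ) - t)) * ((e : ℝ) - η) ^ 2 * κ ^ 2) ∧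
    (∀ t, η < t → t < e →
      ‖cusum p s e t‖ ^ 2 =
        ((e : ℝ) - t) / (((e : ℝ) - s) * ((t : ℝ) - s)) * ((η : ℝ) - s) ^ 2 * κ ^ 2) := by
  refine ⟨fun t hst htη => ?_, fun t hηt hte => ?_⟩
  · have hte : t < e := htη.trans_lt hηe
    have hcast : (s : ℝ) < t ∧ (t : ℝ) < e := ⟨Nat.cast_lt.2 hst, Nat.cast_lt.2 hte⟩
    rw [← cusum_sub_const hst hte p P₁,
      cusum_eq_smul_of_eqOn_Ioc hsη.le hηe.le le_rfl (v := P₂ - P₁) (by grind) (by grind)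
        fun u hu => cusumW_of_lt (htη.trans_lt (mem_Ioc.1 hu).1),
      norm_smul_sq, ← hκ, mul_pow, neg_sq,
      Real.sq_sqrt (div_nonneg (by linarith) (mul_nonneg (by linarith) (by linarith)))]
    ring
  · have hst : s < t := hsη.trans hηt
    have hcast : (s : ℝ) < t ∧ (t : ℝ) < e := ⟨Nat.cast_lt.2 hst, Nat.cast_lt.2 hte⟩
    rw [← cusum_sub_const hst hte p P₂,
      cusum_eq_smul_of_eqOn_Ioc le_rfl hsη.le hηe.le (v := P₁ - P₂) (by grind) (by grind)
        fun u hu => cusumW_of_le ((mem_Ioc.1 hu).2.trans hηt.le),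
      norm_smul_sq, ← norm_neg, neg_sub, ← hκ, mul_pow,
      Real.sq_sqrt (div_nonneg (by linarith) (mul_nonneg (by linarith) (by linarith)))]
    ring

/-- **Lemma (population CUSUM norm for one change point).**  For a sequence in a
real inner product space which equals `P₁` on `(s, η]` and `P₂` on `(η, e]`,
with `κ = ‖P₂ − P₁‖`, the CUSUM statistic satisfies
`‖p̃^{s,e}(t)‖² = ((t−s)/((e−s)(e−t)))(e−η)²κ²` for `s < t ≤ η` and
`‖p̃^{s,e}(t)‖² = ((e−t)/((e−s)(t−s)))(η−s)²κ²` for `η < t < e`. -/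
theorem cusum_norm_single_change_point
    {E : Type*} [NormedAddCommGroup E] [InnerProductSpace ℝ E]
    (T s η e : ℕ) (hsη : s < η) (hηe : η < e) (heT : e ≤ T)
    (p : ℕ → E) (P₁ P₂ : E)
    (h1 : ∀ t, s < t → t ≤ η → p t = P₁)
    (h2 : ∀ t, η < t → t ≤ e → p t = P₂)
    (κ : ℝ) (hκ : κ = ‖P₂ - P₁‖) :
    (∀ t, s < t → t ≤ η →
      ‖cusum p s e t‖ ^ 2 =
        ((t : ℝ) - s) / (((e : ℝ) - s) * ((e : ℝ) - t)) * ((e : ℝ) - η) ^ 2 * κ ^ 2) ∧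
    (∀ t, η < t → t < e →
      ‖cusum p s e t‖ ^ 2 =
        ((e : ℝ) - t) / (((e : ℝ) - s) * ((t : ℝ) - s)) * ((η : ℝ) - s) ^ 2 * κ ^ 2) :=
  cusum_norm_single_change_point_general s η e hsη hηe p P₁ P₂ h1 h2 κ hκ
end

section
/- Let 0 ≤ s < η < e ≤ T be integers and let p(s+1),…,p(e) be a sequence in a real inner product space with p(t) = P₁ for s < t ≤ η and p(t) = P₂ for η < t ≤ e, and set κ = ‖P₂ − P₁‖. Then ‖p̃^{s,e}(η)‖² = ((η − s)(e − η)/(e − s))·κ², and consequently κ²·min{η − s, e − η}/2 ≤ ‖p̃^{s,e}(η)‖² ≤ κ²·min{η − s, e − η}. -/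
/-!
With `a = η - s` and `b = e - η`, the CUSUM weights are constant on each side of the change
point, so
`p̃^{s,e}(η) = a √(b / ((a + b) a)) P₁ - b √(a / ((a + b) b)) P₂ = √(ab / (a + b)) (P₁ - P₂)`.
The bounds are those of `ab / (a + b)`, half the harmonic mean of `a` and `b`, which lies
between `min a b / 2` and `min a b`.
-/

open scoped BigOperators

theorem Real.mul_sqrt_div_self {x : ℝ} (hx : 0 ≤ x) (y : ℝ) : x * √(y / x) = √(x * y) := by
  rcases hx.eq_or_lt with rfl | hx
  · simp
  rw [← Real.sqrt_sq hx.le, ← Real.sqrt_mul (sq_nonneg x), Real.sqrt_sq hx.le]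
  congr 1
  field_simp

theorem min_div_two_le_mul_div_add {a b : ℝ} (ha : 0 ≤ a) (hb : 0 ≤ b) :
    min a b / 2 ≤ a * b / (a + b) := by
  rcases (add_nonneg ha hb).eq_or_lt with hab | hab
  · obtain ⟨rfl, rfl⟩ : a = 0 ∧ b = 0 := ⟨by linarith, by linarith⟩
    simp
  rw [div_le_div_iff₀ two_pos hab]
  rcases le_total a b with h | h
  · rw [min_eq_left h]; nlinarith
  · rw [min_eq_right h]; nlinarith

theorem mul_div_add_le_min {a b : ℝ} (ha : 0 ≤ a) (hb : 0 ≤ b) :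
    a * b / (a + b) ≤ min a b := by
  rcases (add_nonneg ha hb).eq_or_lt with hab | hab
  · obtain ⟨rfl, rfl⟩ : a = 0 ∧ b = 0 := ⟨by linarith, by linarith⟩
    simp
  rw [div_le_iff₀ hab]
  rcases le_total a b with h | h
  · rw [min_eq_left h]; nlinarith
  · rw [min_eq_right h]; nlinarith

theorem cusum_eq_sqrt_smul_sub {V : Type*} [AddCommGroup V] [Module ℝ V]
    {B : ℕ → V} {s t e : ℕ} (hst : s ≤ t) (hte : t ≤ e) {P₁ P₂ : V}
    (h₁ : ∀ u, s < u → u ≤ t → B u = P₁) (h₂ : ∀ u, t < u → u ≤ e → B u = P₂) :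
    cusum B s e t = √(((t : ℝ) - s) * ((e : ℝ) - t) / ((e : ℝ) - s)) • (P₁ - P₂) := by
  set a : ℝ := (t : ℝ) - s
  set b : ℝ := (e : ℝ) - t
  have ha : 0 ≤ a := sub_nonneg.2 (Nat.cast_le.2 hst)
  have hb : 0 ≤ b := sub_nonneg.2 (Nat.cast_le.2 hte)
  have hes : (e : ℝ) - s = a + b := by ring
  have before : ∑ u ∈ Finset.Ioc s t, cusumW s e t u • B u
      = √(a * b / (a + b)) • P₁ := by
    have weight : ∀ u ∈ Finset.Ioc s t, cusumW s e t u • B u = √(b / ((a + b) * a)) • P₁ := by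
      intro u hu
      rw [Finset.mem_Ioc] at hu
      rw [h₁ u hu.1 hu.2, cusumW, if_pos hu.2, hes]
    rw [Finset.sum_congr rfl weight, Finset.sum_const, Nat.card_Ioc,
      ← Nat.cast_smul_eq_nsmul ℝ, smul_smul, Nat.cast_sub hst, ← div_div,
      Real.mul_sqrt_div_self ha, mul_div_assoc]
  have after : ∑ u ∈ Finset.Ioc t e, cusumW s e t u • B u
      = -(√(a * b / (a + b)) • P₂) := by
    have weight : ∀ u ∈ Finset.Ioc t e, cusumW s e t u • B u = -√(a / ((a + b) * b)) • P₂ := by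
      intro u hu
      rw [Finset.mem_Ioc] at hu
      rw [h₂ u hu.1 hu.2, cusumW, if_neg hu.1.not_ge, hes]
    rw [Finset.sum_congr rfl weight, Finset.sum_const, Nat.card_Ioc,
      ← Nat.cast_smul_eq_nsmul ℝ, smul_smul, Nat.cast_sub hte, ← div_div,
      mul_neg, Real.mul_sqrt_div_self hb, neg_smul, mul_div_assoc', mul_comm b]
  rw [cusum, ← Finset.sum_Ioc_consecutive _ hst hte, before, after, hes, smul_sub,
    sub_eq_add_neg]

theorem cusum_norm_at_change_point_general
    {E : Type*} [NormedAddCommGroup E] [InnerProductSpace ℝ E]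
    (s η e : ℕ) (hsη : s < η) (hηe : η < e)
    (p : ℕ → E) (P₁ P₂ : E)
    (h1 : ∀ t, s < t → t ≤ η → p t = P₁)
    (h2 : ∀ t, η < t → t ≤ e → p t = P₂)
    (κ : ℝ) (hκ : κ = ‖P₂ - P₁‖) :
    ‖cusum p s e η‖ ^ 2 =
      ((η : ℝ) - s) * ((e : ℝ) - η) / ((e : ℝ) - s) * κ ^ 2 ∧
    κ ^ 2 * min ((η : ℝ) - s) ((e : ℝ) - η) / 2 ≤ ‖cusum p s e η‖ ^ 2 ∧
    ‖cusum p s e η‖ ^ 2 ≤ κ ^ 2 * min ((η : ℝ) - s) ((e : ℝ) - η) := by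
  set a : ℝ := (η : ℝ) - s
  set b : ℝ := (e : ℝ) - η
  have ha : 0 ≤ a := sub_nonneg.2 (Nat.cast_le.2 hsη.le)
  have hb : 0 ≤ b := sub_nonneg.2 (Nat.cast_le.2 hηe.le)
  have hes : (e : ℝ) - s = a + b := by ring
  have hnorm : ‖cusum p s e η‖ ^ 2 = a * b / (a + b) * κ ^ 2 := by
    rw [cusum_eq_sqrt_smul_sub hsη.le hηe.le h1 h2, hes, norm_smul, mul_pow,
      Real.norm_of_nonneg (Real.sqrt_nonneg _),
      Real.sq_sqrt (div_nonneg (mul_nonneg ha hb) (add_nonneg ha hb)), norm_sub_rev, hκ]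
  refine ⟨by rw [hnorm, hes], ?_, ?_⟩
  · rw [hnorm, mul_div_assoc, mul_comm]
    exact mul_le_mul_of_nonneg_right (min_div_two_le_mul_div_add ha hb) (sq_nonneg κ)
  · rw [hnorm, mul_comm (κ ^ 2)]
    exact mul_le_mul_of_nonneg_right (mul_div_add_le_min ha hb) (sq_nonneg κ)

/-- **Lemma (CUSUM norm at the change point).**  For a sequence in a real inner
product space equal to `P₁` on `(s, η]` and `P₂` on `(η, e]`, with
`κ = ‖P₂ − P₁‖`, one has `‖p̃^{s,e}(η)‖² = ((η−s)(e−η)/(e−s))κ²`, whence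
`κ² min{η−s, e−η}/2 ≤ ‖p̃^{s,e}(η)‖² ≤ κ² min{η−s, e−η}`. -/
theorem cusum_norm_at_change_point
    {E : Type*} [NormedAddCommGroup E] [InnerProductSpace ℝ E]
    (T s η e : ℕ) (hsη : s < η) (hηe : η < e) (heT : e ≤ T)
    (p : ℕ → E) (P₁ P₂ : E)
    (h1 : ∀ t, s < t → t ≤ η → p t = P₁)
    (h2 : ∀ t, η < t → t ≤ e → p t = P₂)
    (κ : ℝ) (hκ : κ = ‖P₂ - P₁‖) :
    ‖cusum p s e η‖ ^ 2 =
      ((η : ℝ) - s) * ((e : ℝ) - η) / ((e : ℝ) - s) * κ ^ 2 ∧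
    κ ^ 2 * min ((η : ℝ) - s) ((e : ℝ) - η) / 2 ≤ ‖cusum p s e η‖ ^ 2 ∧
    ‖cusum p s e η‖ ^ 2 ≤ κ ^ 2 * min ((η : ℝ) - s) ((e : ℝ) - η) :=
  cusum_norm_at_change_point_general s η e hsη hηe p P₁ P₂ h1 h2 κ hκ
end
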